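/- For every positive integer t, setting d = 2^{2t+1}, there exists a set of d mutually quasi-unbiased weighing matrices for parameters (d, d, d/2, 2d); that is, the upper bound f ≤ d for such sets is attained. -/

import Mathlib

/-!
Let `F = GF(2ⁿ)` with `n` odd, `q = 2ⁿ`, and `ψ(x) = (-1)^Tr(x)`. The matrices
`W_b(x, y) = ψ(xy + by³)`, `b ∈ F`, satisfy `(W_b W_{b'}ᵀ)(x, y) = S(b + b', x + y)` for the cubic
sums `S(c, a) = ∑_z ψ(cz³ + az)`. Since `S(0, a) = q·[a = 0]`, each `W_b` is a Hadamard matrix.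
For `c ≠ 0`, expanding `S(c, a)²` and substituting `w = z + u` leaves an inner sum that is linear in
`z` once `ψ(x²) = ψ(x)` is used, and it only survives for `u = 0` and for the unique `u₀` with
`cu₀³ = 1` (cubing is bijective because `3 ∤ 2ⁿ - 1`). Hence `S(c, a)² = q(1 - ψ(au₀)) ∈ {0, 2q}`
as `ψ(1) = -1`, so `(2q)^{-1/2} W_b W_{b'}ᵀ` has entries in `{0, ±1}` and Gram matrix
`q²/(2q) = q/2` times the identity.
-/

open Matrix

/-- `W` is a weighing matrix of order `d` and weight `k`: a `d × d` real matrix with all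
entries in `{-1, 0, 1}` such that `W * Wᵀ = k • 1`. -/
def IsWeighing {d : ℕ} (k : ℝ) (W : Matrix (Fin d) (Fin d) ℝ) : Prop :=
  (∀ i j, W i j = -1 ∨ W i j = 0 ∨ W i j = 1) ∧
    W * Wᵀ = k • (1 : Matrix (Fin d) (Fin d) ℝ)

/-- A family of mutually unbiased weighing matrices of order `d` and weight `k`:
each member is a weighing matrix of weight `k`, and for distinct members
`(1/√k) • (Wᵢ * Wⱼᵀ)` is again a weighing matrix of weight `k`. -/
def MUWM {d f : ℕ} (k : ℝ) (W : Fin f → Matrix (Fin d) (Fin d) ℝ) : Prop :=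
  (∀ i, IsWeighing k (W i)) ∧
    ∀ i j, i ≠ j → IsWeighing k ((Real.sqrt k)⁻¹ • (W i * (W j)ᵀ))

/-- A family of mutually quasi-unbiased weighing matrices for parameters `(d, k, l, a)`:
each member is a weighing matrix of weight `k`, and for distinct members
`(1/√a) • (Wᵢ * Wⱼᵀ)` is a weighing matrix of weight `l`. -/
def MQUWM {d f : ℕ} (k l a : ℝ) (W : Fin f → Matrix (Fin d) (Fin d) ℝ) : Prop :=
  (∀ i, IsWeighing k (W i)) ∧
    ∀ i j, i ≠ j → IsWeighing l ((Real.sqrt a)⁻¹ • (W i * (W j)ᵀ))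

open Finset

theorem pow_injective_of_coprime_card_units {G₀ : Type*} [GroupWithZero G₀] {n : ℕ} (hn : n ≠ 0)
    (h : (Nat.card G₀ˣ).Coprime n) : Function.Injective fun x : G₀ => x ^ n := by
  intro x y hxy
  simp only at hxy
  rcases eq_or_ne x 0 with rfl | hx
  · exact ((pow_eq_zero_iff hn).1 (hxy.symm.trans (zero_pow hn))).symm
  rcases eq_or_ne y 0 with rfl | hy
  · exact (pow_eq_zero_iff hn).1 (hxy.trans (zero_pow hn))
  have := h.pow_left_bijective.injective (a₁ := Units.mk0 x hx) (a₂ := Units.mk0 y hy)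
    (Units.ext (by simpa using hxy))
  simpa using congrArg Units.val this

theorem Nat.coprime_two_pow_sub_one_three {n : ℕ} (hn : Odd n) : (2 ^ n - 1).Coprime 3 := by
  obtain ⟨m, rfl⟩ := hn
  rw [Nat.coprime_comm, Nat.Prime.coprime_iff_not_dvd Nat.prime_three, pow_succ, pow_mul]
  have : 4 ^ m % 3 = 1 := by rw [Nat.pow_mod]; norm_num
  norm_num
  omega

theorem Matrix.transpose_mul_self_eq_smul_one {n 𝕜 : Type*} [Fintype n] [DecidableEq n]
    [Field 𝕜] {A : Matrix n n 𝕜} {k : 𝕜} (hk : k ≠ 0) (h : A * Aᵀ = k • 1) : Aᵀ * A = k • 1 := by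
  have hinv : A * (k⁻¹ • Aᵀ) = 1 := by
    rw [Matrix.mul_smul, h, smul_smul, inv_mul_cancel₀ hk, one_smul]
  rw [← inv_smul_eq_iff₀ hk, ← Matrix.smul_mul, mul_eq_one_comm.1 hinv]

theorem Matrix.mul_transpose_mul_mul_transpose {n 𝕜 : Type*} [Fintype n] [DecidableEq n]
    [Field 𝕜] {A B : Matrix n n 𝕜} {k : 𝕜} (hk : k ≠ 0) (hA : A * Aᵀ = k • 1)
    (hB : B * Bᵀ = k • 1) : A * Bᵀ * (A * Bᵀ)ᵀ = (k * k) • 1 := by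
  rw [transpose_mul, transpose_transpose, Matrix.mul_assoc, ← Matrix.mul_assoc Bᵀ,
    transpose_mul_self_eq_smul_one hk hB, Matrix.smul_mul, Matrix.one_mul, Matrix.mul_smul, hA,
    smul_smul]

theorem isWeighing_inv_sqrt_smul {d : ℕ} {a l : ℝ} (ha : 0 < a) {M : Matrix (Fin d) (Fin d) ℝ}
    (hentry : ∀ i j, M i j ^ 2 = 0 ∨ M i j ^ 2 = a) (hM : M * Mᵀ = (a * l) • 1) :
    IsWeighing l ((√a)⁻¹ • M) := by
  have hs : (√a)⁻¹ ^ 2 * a = 1 := by rw [inv_pow, Real.sq_sqrt ha.le, inv_mul_cancel₀ ha.ne']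
  refine ⟨fun i j => ?_, ?_⟩
  · rw [Matrix.smul_apply, smul_eq_mul]
    rcases hentry i j with h | h
    · simp [pow_eq_zero_iff two_ne_zero |>.1 h]
    · have hsq : ((√a)⁻¹ * M i j) ^ 2 = 1 := by rw [mul_pow, h, hs]
      rcases sq_eq_one_iff.1 hsq with h1 | h1 <;> simp [h1]
  · rw [transpose_smul, Matrix.smul_mul, Matrix.mul_smul, hM, smul_smul, smul_smul]
    congr 1
    linear_combination l * hs

section CharTwoField

variable {F : Type*} [Field F] [Algebra (ZMod 2) F]

theorem charP_two_of_algebra : CharP F 2 := charP_of_injective_algebraMap' (ZMod 2) 2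

attribute [local instance] charP_two_of_algebra

variable (F) in
noncomputable def traceChar : AddChar F ℝ :=
  (AddChar.zmodChar 2 (neg_one_sq : (-1 : ℝ) ^ 2 = 1)).compAddMonoidHom
    (Algebra.trace (ZMod 2) F).toAddMonoidHom

theorem traceChar_apply (x : F) : traceChar F x = (-1) ^ (Algebra.trace (ZMod 2) F x).val := rfl

theorem traceChar_eq_one_or_eq_neg_one (x : F) : traceChar F x = 1 ∨ traceChar F x = -1 :=
  neg_one_pow_eq_or ℝ _

theorem traceChar_eq_one_iff (x : F) : traceChar F x = 1 ↔ Algebra.trace (ZMod 2) F x = 0 := by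
  rw [traceChar_apply, ← ZMod.val_eq_zero]
  have := ZMod.val_lt (Algebra.trace (ZMod 2) F x)
  interval_cases (Algebra.trace (ZMod 2) F x).val <;> norm_num

theorem traceChar_sq [Finite F] (x : F) : traceChar F (x ^ 2) = traceChar F x := by
  have h := Algebra.trace_eq_of_algEquiv (FiniteField.frobeniusAlgEquivOfAlgebraic (ZMod 2) F) x
  rw [FiniteField.coe_frobeniusAlgEquivOfAlgebraic, ZMod.card] at h
  rw [traceChar_apply, traceChar_apply, h]

theorem traceChar_one [Finite F] (hodd : Odd (Module.finrank (ZMod 2) F)) :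
    traceChar F 1 = -1 := by
  have h : Algebra.trace (ZMod 2) F 1 = 1 := by
    rw [← map_one (algebraMap (ZMod 2) F), Algebra.trace_algebraMap, nsmul_eq_mul, mul_one,
      ZMod.natCast_eq_one_iff_odd]
    exact hodd
  rw [traceChar_apply, h, ZMod.val_one, pow_one]

theorem traceChar_isPrimitive [Finite F] : (traceChar F).IsPrimitive := fun a ha h =>
  ha <| (traceForm_nondegenerate (ZMod 2) F).1 a fun y =>
    (traceChar_eq_one_iff (a * y)).1 (DFunLike.congr_fun h y)

variable [Fintype F]

theorem sum_traceChar_mul [DecidableEq F] (b : F) :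
    ∑ x, traceChar F (b * x) = if b = 0 then (Fintype.card F : ℝ) else 0 := by
  simp_rw [mul_comm b]
  exact_mod_cast AddChar.sum_mulShift b traceChar_isPrimitive

theorem card_eq_two_pow_finrank : Fintype.card F = 2 ^ Module.finrank (ZMod 2) F := by
  rw [Module.card_eq_pow_finrank (K := ZMod 2), ZMod.card]

theorem pow_three_bijective (hodd : Odd (Module.finrank (ZMod 2) F)) :
    Function.Bijective fun x : F => x ^ 3 := by
  refine Finite.injective_iff_bijective.1 (pow_injective_of_coprime_card_units three_ne_zero ?_)
  rw [Nat.card_units, Nat.card_eq_fintype_card, card_eq_two_pow_finrank]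
  exact Nat.coprime_two_pow_sub_one_three hodd

variable (F) in
noncomputable def cubicSum (c a : F) : ℝ := ∑ z, traceChar F (c * z ^ 3 + a * z)

theorem cubicSum_zero_left [DecidableEq F] (a : F) :
    cubicSum F 0 a = if a = 0 then (Fintype.card F : ℝ) else 0 := by
  simp only [cubicSum, zero_mul, zero_add, sum_traceChar_mul]

theorem sq_cubicSum (c a : F) : cubicSum F c a ^ 2 =
    ∑ u, traceChar F (c * u ^ 3 + a * u) * ∑ z, traceChar F (c * u * z ^ 2 + c * u ^ 2 * z) := by
  have h2 : (2 : F) = 0 := CharTwo.two_eq_zero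
  calc cubicSum F c a ^ 2
      = ∑ z, ∑ u, traceChar F (c * z ^ 3 + a * z) *
          traceChar F (c * (z + u) ^ 3 + a * (z + u)) := by
        rw [sq, cubicSum, sum_mul_sum]
        exact sum_congr rfl fun z _ => (Equiv.sum_comp (Equiv.addLeft z) _).symm
    _ = ∑ z, ∑ u, traceChar F (c * u ^ 3 + a * u) *
          traceChar F (c * u * z ^ 2 + c * u ^ 2 * z) := by
        refine sum_congr rfl fun z _ => sum_congr rfl fun u _ => ?_
        rw [← AddChar.map_add_eq_mul, ← AddChar.map_add_eq_mul]
        congr 1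
        -- in characteristic 2, `z³ + (z + u)³ = u³ + uz² + u²z`
        linear_combination (c * z ^ 3 + a * z + c * z ^ 2 * u + c * z * u ^ 2) * h2
    _ = _ := by
        rw [sum_comm]
        simp_rw [mul_sum]

theorem sum_traceChar_quadratic [DecidableEq F] {c : F} (hc : c ≠ 0) (u : F) :
    ∑ z, traceChar F (c * u * z ^ 2 + c * u ^ 2 * z) =
      if u = 0 ∨ c * u ^ 3 = 1 then (Fintype.card F : ℝ) else 0 := by
  -- writing `cu = β²`, Frobenius invariance of the trace turns `ψ(cuz²)` into `ψ(βz)`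
  obtain ⟨β, hβ⟩ := FiniteField.isSquare_of_char_two (ringChar.eq F 2) (c * u)
  have hlinear : ∀ z, traceChar F (c * u * z ^ 2 + c * u ^ 2 * z) =
      traceChar F ((β + c * u ^ 2) * z) := fun z => by
    rw [AddChar.map_add_eq_mul, hβ, show β * β * z ^ 2 = (β * z) ^ 2 by ring, traceChar_sq,
      ← AddChar.map_add_eq_mul, add_mul]
  have hroots : β + c * u ^ 2 = 0 ↔ u = 0 ∨ c * u ^ 3 = 1 := by
    calc β + c * u ^ 2 = 0 ↔ β * β = (c * u ^ 2) ^ 2 := by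
          rw [CharTwo.add_eq_zero, ← sq, CharTwo.sq_inj]
      _ ↔ c * u * (c * u ^ 3 - 1) = 0 := by
          rw [← hβ]
          constructor <;> intro h <;> linear_combination -h
      _ ↔ u = 0 ∨ c * u ^ 3 = 1 := by simp [hc, sub_eq_zero]
  simp_rw [hlinear, sum_traceChar_mul, hroots]

theorem sq_cubicSum_eq_zero_or (hodd : Odd (Module.finrank (ZMod 2) F)) {c : F} (hc : c ≠ 0)
    (a : F) : cubicSum F c a ^ 2 = 0 ∨ cubicSum F c a ^ 2 = 2 * Fintype.card F := by
  classical
  obtain ⟨u₀, hu₀⟩ := (pow_three_bijective hodd).2 c⁻¹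
  have hcu₀ : c * u₀ ^ 3 = 1 := by simp only at hu₀; rw [hu₀, mul_inv_cancel₀ hc]
  have hu₀_ne : u₀ ≠ 0 := by rintro rfl; simp at hcu₀
  have hroots : ∀ u, u = 0 ∨ c * u ^ 3 = 1 ↔ u = 0 ∨ u = u₀ := fun u => by
    rw [← hcu₀, mul_right_inj' hc, (pow_three_bijective hodd).1.eq_iff]
  rw [sq_cubicSum]
  simp_rw [sum_traceChar_quadratic hc, hroots, mul_ite, mul_zero]
  rw [Fintype.sum_eq_add 0 u₀ hu₀_ne.symm fun u hu => if_neg (not_or.2 hu),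
    if_pos (Or.inl rfl), if_pos (Or.inr rfl), hcu₀]
  simp only [zero_pow three_ne_zero, mul_zero, add_zero, AddChar.map_zero_eq_one]
  rw [AddChar.map_add_eq_mul, traceChar_one hodd]
  rcases traceChar_eq_one_or_eq_neg_one (a * u₀) with h | h <;> rw [h]
  · left; ring
  · right; ring

variable (F) in
noncomputable def cubicMatrix (b : F) : Matrix F F ℝ :=
  of fun x y => traceChar F (x * y + b * y ^ 3)

theorem cubicMatrix_mul_transpose_apply (b b' x y : F) :
    (cubicMatrix F b * (cubicMatrix F b')ᵀ) x y = cubicSum F (b + b') (x + y) := by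
  simp only [mul_apply, transpose_apply, cubicMatrix, of_apply, cubicSum,
    ← AddChar.map_add_eq_mul]
  exact sum_congr rfl fun z _ => congrArg _ (by ring)

theorem cubicMatrix_mul_transpose_self [DecidableEq F] (b : F) :
    cubicMatrix F b * (cubicMatrix F b)ᵀ = (Fintype.card F : ℝ) • 1 := by
  ext x y
  simp only [cubicMatrix_mul_transpose_apply, CharTwo.add_self_eq_zero, cubicSum_zero_left,
    CharTwo.add_eq_zero, Matrix.smul_apply, one_apply, smul_eq_mul, mul_ite, mul_one, mul_zero]

theorem mquwm_cubicMatrix (hodd : Odd (Module.finrank (ZMod 2) F)) {d : ℕ} (e : Fin d ≃ F) :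
    MQUWM (d : ℝ) (d / 2) (2 * d) fun i => (cubicMatrix F (e i)).submatrix e e := by
  classical
  have hcard : (Fintype.card F : ℝ) = d := by rw [← Fintype.card_congr e, Fintype.card_fin]
  have hd : (0 : ℝ) < d := hcard ▸ Nat.cast_pos.2 Fintype.card_pos
  have hprod : ∀ i j, (cubicMatrix F (e i)).submatrix e e * ((cubicMatrix F (e j)).submatrix e e)ᵀ
      = (cubicMatrix F (e i) * (cubicMatrix F (e j))ᵀ).submatrix e e := fun i j => by
    rw [transpose_submatrix, submatrix_mul_equiv]
  have hhad : ∀ i, (cubicMatrix F (e i)).submatrix e e * ((cubicMatrix F (e i)).submatrix e e)ᵀ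
      = (d : ℝ) • 1 := fun i => by
    rw [hprod, cubicMatrix_mul_transpose_self, hcard]
    ext x y
    simp [Matrix.one_apply]
  refine ⟨fun i => ⟨fun x y => ?_, hhad i⟩, fun i j hij => ?_⟩
  · rcases traceChar_eq_one_or_eq_neg_one (e x * e y + e i * e y ^ 3) with h | h <;>
      simp [cubicMatrix, h]
  · refine isWeighing_inv_sqrt_smul (by positivity) (fun x y => ?_) ?_
    · rw [hprod, submatrix_apply, cubicMatrix_mul_transpose_apply]
      rw [← hcard]
      exact sq_cubicSum_eq_zero_or hodd (fun h => hij (e.injective (CharTwo.add_eq_zero.1 h))) _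
    · rw [mul_transpose_mul_mul_transpose hd.ne' (hhad i) (hhad j)]
      congr 1
      ring

end CharTwoField

theorem stmt6 (t : ℕ) :
    ∃ W : Fin (2 ^ (2 * t + 1)) →
        Matrix (Fin (2 ^ (2 * t + 1))) (Fin (2 ^ (2 * t + 1))) ℝ,
      MQUWM ((2 ^ (2 * t + 1) : ℕ) : ℝ) (((2 ^ (2 * t + 1) : ℕ) : ℝ) / 2)
        ((2 * 2 ^ (2 * t + 1) : ℕ) : ℝ) W := by
  let F := GaloisField 2 (2 * t + 1)
  let _ : Fintype F := Fintype.ofFinite F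
  have hrank : Module.finrank (ZMod 2) F = 2 * t + 1 := GaloisField.finrank 2 (by omega)
  have hcard : Fintype.card F = 2 ^ (2 * t + 1) := by rw [card_eq_two_pow_finrank, hrank]
  have hodd : Odd (Module.finrank (ZMod 2) F) := by rw [hrank]; exact odd_two_mul_add_one t
  exact ⟨_, by exact_mod_cast mquwm_cubicMatrix hodd (Fintype.equivFinOfCardEq hcard).symm⟩
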